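/- Fix ℏ > 0, let φ₁ : ℝ → ℝ be a smooth diffeomorphism and φ₂ : ℝ → ℝ smooth, and let U be defined by (Uφ)(x') = (2πℏ)^{-1/2} |φ₁'(x')|^{1/2} ∫_ℝ φ(x) e^{−(i/ℏ)(x φ₁(x') + φ₂(x'))} dx. Let ψ ∈ L²(ℝ) be such that its ℏ-Fourier transform ℱ_ℏψ is smooth and compactly supported, and define Aψ = ℱ_ℏ^{-1}( ξ ↦ φ₁^{-1}(ξ) · (ℱ_ℏψ)(ξ) ), i.e., A is the functional calculus φ₁^{-1}(p̂) of the momentum operator p̂ = −iℏ d/dx. Then U intertwines A with multiplication by the new position coordinate: (U(Aψ))(x') = x' · (Uψ)(x') for almost every x' ∈ ℝ. -/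

import Mathlib

open MeasureTheory Complex Real

/-- The integral operator associated with the canonical transformation generated by
`F₁(x,x') = x φ₁(x') + φ₂(x')`:
`(Uφ)(x') = (2πℏ)^{-1/2} |φ₁'(x')|^{1/2} ∫ φ(x) e^{−(i/ℏ)(x φ₁(x') + φ₂(x'))} dx`. -/
noncomputable def Uker (ℏ : ℝ) (φ₁ φ₂ : ℝ → ℝ) (φ : ℝ → ℂ) : ℝ → ℂ := fun x' =>
  ((Real.sqrt (2 * π * ℏ) : ℝ) : ℂ)⁻¹ * ((Real.sqrt |deriv φ₁ x'| : ℝ) : ℂ) *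
    ∫ x : ℝ, φ x * Complex.exp (-(Complex.I / (ℏ : ℂ)) * ((x * φ₁ x' + φ₂ x' : ℝ) : ℂ))

/-- The inverse ℏ-Fourier transform `(ℱ_ℏ⁻¹ g)(x) = (2πℏ)^{-1/2} ∫ g(ξ) e^{ixξ/ℏ} dξ`. -/
noncomputable def invFourierH (ℏ : ℝ) (g : ℝ → ℂ) : ℝ → ℂ := fun x =>
  ((Real.sqrt (2 * π * ℏ) : ℝ) : ℂ)⁻¹ *
    ∫ ξ : ℝ, g ξ * Complex.exp (Complex.I * ((x * ξ : ℝ) : ℂ) / (ℏ : ℂ))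

open FourierTransform

private theorem invFun_smooth (φ₁ : ℝ → ℝ) (hφ₁smooth : ContDiff ℝ (⊤ : ℕ∞) φ₁)
    (hφ₁bij : Function.Bijective φ₁) (hφ₁deriv : ∀ x, deriv φ₁ x ≠ 0) :
    ContDiff ℝ (⊤ : ℕ∞) (Function.invFun φ₁) := by
  rw [contDiff_iff_contDiffAt]
  intro ξ
  set x := Function.invFun φ₁ ξ with hx
  have hfx : φ₁ x = ξ := Function.invFun_eq (hφ₁bij.2 ξ)
  have hC : ContDiffAt ℝ (⊤ : ℕ∞) φ₁ x := hφ₁smooth.contDiffAt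
  have hD : HasDerivAt φ₁ (deriv φ₁ x) x :=
    (hφ₁smooth.differentiable (by simp)).differentiableAt.hasDerivAt
  set e : ℝ ≃L[ℝ] ℝ := ContinuousLinearEquiv.unitsEquivAut ℝ (Units.mk0 _ (hφ₁deriv x))
  have hF : HasFDerivAt φ₁ (e : ℝ →L[ℝ] ℝ) x := by
    refine hD.hasFDerivAt.congr_fderiv ?_
    ext t
    simp [e, ContinuousLinearEquiv.unitsEquivAut]
  have hloc := hC.to_localInverse (f' := e) hF (by simp)
  rw [hfx] at hloc
  refine hloc.congr_of_eventuallyEq ?_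
  have hev : ∀ᶠ y in nhds ξ, φ₁ ((hC.localInverse hF (by simp)) y) = y := by
    have := (hC.hasStrictFDerivAt' hF (by simp)).eventually_right_inverse
    rwa [hfx] at this
  filter_upwards [hev] with y hy
  conv_lhs => rw [← hy]
  exact (Function.leftInverse_invFun hφ₁bij.1 _)

theorem integrable_fourier_cc (h : ℝ → ℂ) (hs : ContDiff ℝ (⊤ : ℕ∞) h) (hc : HasCompactSupport h) :
    Integrable (𝓕 h) := by
  have decay : ∀ (k n : ℕ), ∃ C, ∀ x : ℝ, ‖x‖ ^ k * ‖iteratedFDeriv ℝ n h x‖ ≤ C := by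
    intro k n
    have hcont : Continuous fun x : ℝ => ‖x‖ ^ k * ‖iteratedFDeriv ℝ n h x‖ :=
      (continuous_norm.pow k).mul (hs.continuous_iteratedFDeriv (by exact_mod_cast le_top)).norm
    have hsupp : HasCompactSupport fun x : ℝ => ‖x‖ ^ k * ‖iteratedFDeriv ℝ n h x‖ :=
      ((hc.iteratedFDeriv n).norm).mul_left
    rcases hsupp.exists_bound_of_continuous hcont with ⟨C, hC⟩
    refine ⟨C, fun x => ?_⟩
    have := hC x
    rwa [Real.norm_of_nonneg (by positivity)] at this
  let S : SchwartzMap ℝ ℂ := ⟨h, hs.of_le (by simp), decay⟩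
  have : 𝓕 h = 𝓕 (S : ℝ → ℂ) := rfl
  rw [this, ← SchwartzMap.fourier_coe, ← SchwartzMap.fourierTransformCLM_apply (𝕜 := ℂ)]
  exact (SchwartzMap.fourierTransformCLM ℂ S).integrable

theorem key (ℏ : ℝ) (hℏ : 0 < ℏ) (h : ℝ → ℂ) (hs : ContDiff ℝ (⊤ : ℕ∞) h)
    (hc : HasCompactSupport h) (η : ℝ) :
    ∫ x : ℝ, invFourierH ℏ h x * Complex.exp (-(Complex.I / (ℏ : ℂ)) * ((x * η : ℝ) : ℂ))
      = ((Real.sqrt (2 * π * ℏ) : ℝ) : ℂ) * h η := by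
  set a : ℝ := 2 * π * ℏ with ha_def
  have ha : 0 < a := by positivity
  have hℏ0 : (ℏ : ℂ) ≠ 0 := Complex.ofReal_ne_zero.2 hℏ.ne'
  have hπC : (π : ℂ) ≠ 0 := Complex.ofReal_ne_zero.2 Real.pi_ne_zero
  set c : ℝ := Real.sqrt a with hc_def
  have hcpos : 0 < c := Real.sqrt_pos.2 ha
  have hc0 : (c : ℂ) ≠ 0 := Complex.ofReal_ne_zero.2 hcpos.ne'
  set H : ℝ → ℂ := fun u => h (a * u) with hH_def
  have hHs : ContDiff ℝ (⊤ : ℕ∞) H := hs.comp (contDiff_const.mul contDiff_id)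
  have hHc : HasCompactSupport H := hc.comp_homeomorph (Homeomorph.mulLeft₀ a ha.ne')
  -- Step 1
  have step1 : ∀ x : ℝ, invFourierH ℏ h x = (c : ℂ)⁻¹ * (a : ℂ) * (𝓕⁻ H) x := by
    intro x
    have hcv := MeasureTheory.Measure.integral_comp_mul_left
      (fun ξ : ℝ => h ξ * Complex.exp (Complex.I * ((x * ξ : ℝ) : ℂ) / (ℏ : ℂ))) a
    have hinv : 𝓕⁻ H x = ∫ u : ℝ, Complex.exp ((↑(2 * π * (u * x)) * Complex.I)) • H u := by
      rw [Real.fourierInv_eq']; simp [RCLike.inner_apply]; simp only [mul_comm (x : ℂ)]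
    rw [invFourierH, hinv]
    have heq : ∀ u : ℝ,
        Complex.exp ((↑(2 * π * (u * x)) * Complex.I)) • H u
          = h (a * u) * Complex.exp (Complex.I * ((x * (a * u) : ℝ) : ℂ) / (ℏ : ℂ)) := by
      intro u
      rw [smul_eq_mul, mul_comm]
      congr 1
      congr 1
      rw [ha_def]
      push_cast
      field_simp
    simp_rw [heq]
    rw [show (∫ u : ℝ, h (a * u) * Complex.exp (Complex.I * ((x * (a * u) : ℝ) : ℂ) / (ℏ : ℂ)))
        = |a⁻¹| • ∫ ξ : ℝ, h ξ * Complex.exp (Complex.I * ((x * ξ : ℝ) : ℂ) / (ℏ : ℂ)) from hcv]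
    rw [abs_of_pos (inv_pos.2 ha), Complex.real_smul]
    have hrfl : Real.sqrt (2 * π * ℏ) = c := rfl
    rw [hrfl]
    have haC : (a : ℂ) ≠ 0 := Complex.ofReal_ne_zero.2 ha.ne'
    push_cast
    field_simp
  simp_rw [step1, mul_assoc, MeasureTheory.integral_const_mul]
  -- Step 3
  have step3 : (∫ x : ℝ, (𝓕⁻ H) x * Complex.exp (-(Complex.I / (ℏ : ℂ)) * ((x * η : ℝ) : ℂ)))
      = (𝓕 (𝓕⁻ H)) (η / a) := by
    rw [Real.fourier_eq']
    refine MeasureTheory.integral_congr_ae (Filter.Eventually.of_forall fun v => ?_)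
    dsimp only
    rw [smul_eq_mul, mul_comm]
    congr 1
    have hvi : (inner ℝ v (η / a) : ℝ) = v * (η / a) := by simp [RCLike.inner_apply]; ring
    rw [hvi]
    congr 1
    rw [ha_def]
    push_cast
    field_simp
  rw [step3]
  -- Step 4: Fourier inversion
  have hHint : Integrable H := hHs.continuous.integrable_of_hasCompactSupport hHc
  have hFHint : Integrable (𝓕 H) := integrable_fourier_cc H hHs hHc
  rw [hHs.continuous.fourier_fourierInv_eq hHint hFHint]
  have : H (η / a) = h η := by rw [hH_def]; congr 1; field_simp
  rw [this]
  have hca : (a : ℂ) = (c : ℂ) * (c : ℂ) := by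
    rw [← Complex.ofReal_mul, Real.mul_self_sqrt ha.le]
  rw [hca]
  field_simp

private theorem key_full (ℏ : ℝ) (hℏ : 0 < ℏ) (φ₁ φ₂ : ℝ → ℝ) (x' : ℝ)
    (f : ℝ → ℂ) (hf : ContDiff ℝ (⊤ : ℕ∞) f) (hfc : HasCompactSupport f) :
    (∫ x : ℝ, invFourierH ℏ f x *
        Complex.exp (-(Complex.I / (ℏ : ℂ)) * ((x * φ₁ x' + φ₂ x' : ℝ) : ℂ)))
      = ((Real.sqrt (2 * π * ℏ) : ℝ) : ℂ) * f (φ₁ x') *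
          Complex.exp (-(Complex.I / (ℏ : ℂ)) * ((φ₂ x' : ℝ) : ℂ)) := by
  have hsplit : ∀ x : ℝ,
      Complex.exp (-(Complex.I / (ℏ : ℂ)) * ((x * φ₁ x' + φ₂ x' : ℝ) : ℂ))
        = Complex.exp (-(Complex.I / (ℏ : ℂ)) * ((x * φ₁ x' : ℝ) : ℂ)) *
            Complex.exp (-(Complex.I / (ℏ : ℂ)) * ((φ₂ x' : ℝ) : ℂ)) := by
    intro x
    rw [← Complex.exp_add]
    congr 1
    push_cast
    ring
  simp_rw [hsplit, ← mul_assoc]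
  rw [MeasureTheory.integral_mul_const]
  rw [key ℏ hℏ f hf hfc (φ₁ x')]

/-- Fix ℏ > 0, a smooth diffeomorphism `φ₁` and smooth `φ₂`.  Let `ψ ∈ L²(ℝ)` have
smooth compactly supported ℏ-Fourier transform `g = ℱ_ℏψ` (i.e. `ψ = ℱ_ℏ⁻¹ g` with
`g ∈ C_c^∞`), and let `Aψ = ℱ_ℏ⁻¹(ξ ↦ φ₁⁻¹(ξ)·g(ξ))` be the functional calculus
`φ₁⁻¹(p̂)` of the momentum operator `p̂ = −iℏ d/dx` applied to `ψ`.  Then the operator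
`U` of the canonical transformation generated by `F₁(x,x') = x φ₁(x') + φ₂(x')`
intertwines `A` with multiplication by the new position coordinate:
`(U(Aψ))(x') = x'·(Uψ)(x')` for almost every `x'`. -/
theorem U_intertwines_new_position (ℏ : ℝ) (hℏ : 0 < ℏ) (φ₁ φ₂ : ℝ → ℝ)
    (hφ₁smooth : ContDiff ℝ (⊤ : ℕ∞) φ₁) (hφ₁bij : Function.Bijective φ₁)
    (hφ₁deriv : ∀ x, deriv φ₁ x ≠ 0) (hφ₂smooth : ContDiff ℝ (⊤ : ℕ∞) φ₂)
    (g : ℝ → ℂ) (hg : ContDiff ℝ (⊤ : ℕ∞) g) (hgc : HasCompactSupport g)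
    (ψ Aψ : ℝ → ℂ)
    (hψ : ψ = invFourierH ℏ g)
    (hAψ : Aψ = invFourierH ℏ fun ξ => ((Function.invFun φ₁ ξ : ℝ) : ℂ) * g ξ) :
    ∀ᵐ x' ∂(volume : Measure ℝ),
      Uker ℏ φ₁ φ₂ Aψ x' = (x' : ℂ) * Uker ℏ φ₁ φ₂ ψ x' := by

  subst hψ hAψ
  have hinvs : ContDiff ℝ (⊤ : ℕ∞) (Function.invFun φ₁) :=
    invFun_smooth φ₁ hφ₁smooth hφ₁bij hφ₁deriv
  set h : ℝ → ℂ := fun ξ => ((Function.invFun φ₁ ξ : ℝ) : ℂ) * g ξ with hh_def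
  have hhs : ContDiff ℝ (⊤ : ℕ∞) h := (Complex.ofRealCLM.contDiff.comp hinvs).mul hg
  have hhc : HasCompactSupport h := hgc.mul_left
  refine Filter.Eventually.of_forall fun x' => ?_
  simp only [Uker]
  rw [key_full ℏ hℏ φ₁ φ₂ x' h hhs hhc, key_full ℏ hℏ φ₁ φ₂ x' g hg hgc]
  have hhval : h (φ₁ x') = (x' : ℂ) * g (φ₁ x') := by
    rw [hh_def]
    simp only
    rw [Function.leftInverse_invFun hφ₁bij.1 x']
  rw [hhval]
  ring
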